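/- The real number ∑_{n=1}^∞ f(n) 2^{-n} is irrational for every completely multiplicative function f : ℕ → {-1,1} with f(p) = -1 for some prime p. -/

import Mathlib

/-!
Write `x = ∑ aₙ 2^{-(n+1)}` with `aₙ = f (n + 1) ∈ {±1}` and let `Tₖ = ∑ a_{k+n} 2^{-(n+1)}` be
its tails, so that `T_{k+1} = 2 Tₖ - aₖ` and `|Tₖ| ≤ 1`. If `x = r / d`, every `d Tₖ` is an integer
in `[-d, d]`, so two tails coincide. A nonzero tail determines its leading digit by its sign, hence
the digits are eventually periodic (a zero tail makes them eventually constant).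

For a completely multiplicative `f`, a period `q` from `N` on gives `f (q i + q) = f (q i)`, hence
`f (i + 1) = f i` for `i ≥ N`: `f` is eventually constant, and comparing `f (m²) = 1` with
`f (p m²) = f p` for large `m` forces `f p = 1`.
-/

def EventuallyPeriodic {α : Type*} (a : ℕ → α) : Prop :=
  ∃ N q, 0 < q ∧ ∀ n, N ≤ n → a (n + q) = a n

namespace SignedBinary

variable {a : ℕ → ℤ}

noncomputable def tail (a : ℕ → ℤ) (k : ℕ) : ℝ := ∑' n, (a (k + n) : ℝ) / 2 ^ (n + 1)

variable (ha : ∀ n, a n = -1 ∨ a n = 1)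
include ha

lemma norm_term (k n : ℕ) : ‖(a (k + n) : ℝ) / 2 ^ (n + 1)‖ = 1 / 2 / 2 ^ n := by
  rw [norm_div, norm_pow, Real.norm_ofNat, pow_succ]
  rcases ha (k + n) with h | h <;> simp [h, div_eq_mul_inv, mul_comm]

lemma summable_tail (k : ℕ) : Summable fun n => (a (k + n) : ℝ) / 2 ^ (n + 1) :=
  .of_norm_bounded (summable_geometric_two' 1) fun n => (norm_term ha k n).le

lemma abs_tail_le_one (k : ℕ) : |tail a k| ≤ 1 := by
  calc |tail a k| ≤ ∑' n, ‖(a (k + n) : ℝ) / 2 ^ (n + 1)‖ :=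
        norm_tsum_le_tsum_norm ((summable_geometric_two' 1).congr fun n => (norm_term ha k n).symm)
    _ = 1 := by simp_rw [norm_term ha k]; exact tsum_geometric_two' 1

lemma tail_succ (k : ℕ) : tail a (k + 1) = 2 * tail a k - a k := by
  have h := (summable_tail ha k).tsum_eq_zero_add
  simp_rw [← add_assoc, add_right_comm k _ 1, pow_succ _ (_ + 1), ← div_div, tsum_div_const] at h
  rw [tail, tail, h, add_zero, zero_add, pow_one]
  ring

lemma coeff_eq_one_of_pos {k : ℕ} (hk : 0 < tail a k) : a k = 1 := by
  have := abs_le.1 (abs_tail_le_one ha (k + 1))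
  rcases ha k with h | h
  · rw [tail_succ ha, h] at this; push_cast at this; linarith
  · exact h

lemma coeff_eq_neg_one_of_neg {k : ℕ} (hk : tail a k < 0) : a k = -1 := by
  have := abs_le.1 (abs_tail_le_one ha (k + 1))
  rcases ha k with h | h
  · exact h
  · rw [tail_succ ha, h] at this; push_cast at this; linarith

lemma coeff_eq_of_tail_eq {m n : ℕ} (h : tail a m = tail a n) (h0 : tail a m ≠ 0) :
    a m = a n := by
  rcases h0.lt_or_gt with hm | hm
  · rw [coeff_eq_neg_one_of_neg ha hm, coeff_eq_neg_one_of_neg ha (h ▸ hm)]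
  · rw [coeff_eq_one_of_pos ha hm, coeff_eq_one_of_pos ha (h ▸ hm)]

lemma tail_succ_eq_of_abs_eq_one {k : ℕ} (hk : |tail a k| = 1) :
    (a k : ℝ) = tail a k ∧ tail a (k + 1) = tail a k := by
  rcases abs_eq (zero_le_one' ℝ) |>.1 hk with h | h
  · have hak := coeff_eq_one_of_pos ha (h ▸ one_pos)
    rw [tail_succ ha, hak, h]; norm_num
  · have hak := coeff_eq_neg_one_of_neg ha (h ▸ neg_one_lt_zero)
    rw [tail_succ ha, hak, h]; norm_num

lemma eventuallyPeriodic_of_tail_eq_zero {k : ℕ} (hk : tail a k = 0) : EventuallyPeriodic a := by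
  have hk1 : |tail a (k + 1)| = 1 := by
    rw [tail_succ ha, hk]; rcases ha k with h | h <;> simp [h]
  have hconst : ∀ n, k + 1 ≤ n → tail a n = tail a (k + 1) := by
    intro n hn
    induction n, hn using Nat.le_induction with
    | base => rfl
    | succ n _ ih => rw [(tail_succ_eq_of_abs_eq_one ha (ih ▸ hk1)).2, ih]
  refine ⟨k + 1, 1, one_pos, fun n hn => ?_⟩
  have hcoeff : ∀ n, k + 1 ≤ n → (a n : ℝ) = tail a (k + 1) := fun n hn =>
    (tail_succ_eq_of_abs_eq_one ha (hconst n hn ▸ hk1)).1.trans (hconst n hn)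
  exact_mod_cast (hcoeff (n + 1) (by omega)).trans (hcoeff n hn).symm

lemma eventuallyPeriodic_of_tail_eq (hz : ∀ k, tail a k ≠ 0) {m n : ℕ} (hmn : m < n)
    (h : tail a m = tail a n) : EventuallyPeriodic a := by
  have hshift : ∀ j, tail a (m + j) = tail a (n + j) := by
    intro j
    induction j with
    | zero => exact h
    | succ j ih =>
      rw [← add_assoc, ← add_assoc, tail_succ ha, tail_succ ha, ih,
        coeff_eq_of_tail_eq ha ih (hz _)]
  refine ⟨m, n - m, by omega, fun i hi => ?_⟩
  have := coeff_eq_of_tail_eq ha (hshift (i - m)) (hz _)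
  rwa [Nat.add_sub_cancel' hi, show n + (i - m) = i + (n - m) by omega, eq_comm] at this

lemma exists_int_eq_den_mul_tail {r : ℚ} (hr : tail a 0 = r) (k : ℕ) :
    ∃ z : ℤ, (z : ℝ) = r.den * tail a k := by
  induction k with
  | zero =>
    refine ⟨r.num, ?_⟩
    rw [hr, ← Rat.cast_natCast, ← Rat.cast_mul, Rat.den_mul_eq_num, Rat.cast_intCast]
  | succ k ih =>
    obtain ⟨z, hz⟩ := ih
    exact ⟨2 * z - r.den * a k, by rw [tail_succ ha]; push_cast; rw [hz]; ring⟩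

lemma exists_lt_tail_eq {r : ℚ} (hr : tail a 0 = r) : ∃ m n, m < n ∧ tail a m = tail a n := by
  choose g hg using exists_int_eq_den_mul_tail ha hr
  have hden : (r.den : ℝ) ≠ 0 := by positivity
  have hbound : ∀ k, g k ∈ Set.Icc (-(r.den : ℤ)) r.den := by
    intro k
    have : |(g k : ℝ)| ≤ r.den := by
      rw [hg, abs_mul, Nat.abs_cast]
      exact mul_le_of_le_one_right (Nat.cast_nonneg _) (abs_tail_le_one ha k)
    exact abs_le.1 (by exact_mod_cast this)
  obtain ⟨m, n, hmn, hg'⟩ := (Set.finite_Icc _ _).exists_lt_map_eq_of_forall_mem hbound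
  refine ⟨m, n, hmn, mul_left_cancel₀ hden ?_⟩
  rw [← hg, ← hg, hg']

theorem eventuallyPeriodic_of_tail_zero_eq_ratCast {r : ℚ} (hr : tail a 0 = r) :
    EventuallyPeriodic a := by
  by_cases hz : ∃ k, tail a k = 0
  · obtain ⟨k, hk⟩ := hz
    exact eventuallyPeriodic_of_tail_eq_zero ha hk
  · obtain ⟨m, n, hmn, h⟩ := exists_lt_tail_eq ha hr
    exact eventuallyPeriodic_of_tail_eq ha (fun k hk => hz ⟨k, hk⟩) hmn h

end SignedBinary

namespace CompletelyMultiplicative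

variable {f : ℕ → ℤ} (hmul : ∀ m n, 1 ≤ m → 1 ≤ n → f (m * n) = f m * f n)
  (hval : ∀ n, 1 ≤ n → f n = -1 ∨ f n = 1)
include hmul hval

lemma eventually_const_of_periodic {N q : ℕ} (hN : 1 ≤ N) (hq : 0 < q)
    (hper : ∀ n, N ≤ n → f (n + q) = f n) : ∀ n, N ≤ n → f n = f N := by
  have hfq : f q ≠ 0 := by rcases hval q hq with h | h <;> simp [h]
  intro n hn
  induction n, hn using Nat.le_induction with
  | base => rfl
  | succ n hn ih =>
    have h := hper (q * n) (hn.trans (Nat.le_mul_of_pos_left n hq))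
    rw [← mul_add_one, hmul q _ hq (by omega), hmul q n hq (by omega)] at h
    rw [mul_left_cancel₀ hfq h, ih]

lemma eq_one_of_eventually_const {N : ℕ} {c : ℤ} (hconst : ∀ n, N ≤ n → f n = c) {p : ℕ}
    (hp : 1 ≤ p) : f p = 1 := by
  set m := N + 1
  have hsq : f (m * m) = 1 := by
    rcases hval m (by omega) with h | h <;> simp [hmul m m (by omega) (by omega), h]
  have hm : N ≤ m * m := le_trans (by omega) (Nat.le_mul_self m)
  have h := (hconst (p * (m * m)) (hm.trans (Nat.le_mul_of_pos_left _ hp))).trans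
    (hconst _ hm).symm
  rwa [hmul p _ hp (Nat.one_le_iff_ne_zero.2 (by simp [m])), hsq, mul_one] at h

lemma eq_one_of_eventuallyPeriodic (h : EventuallyPeriodic fun n => f (n + 1)) {p : ℕ}
    (hp : 1 ≤ p) : f p = 1 := by
  obtain ⟨N, q, hq, hper⟩ := h
  have hper' : ∀ n, N + 1 ≤ n → f (n + q) = f n := by
    intro n hn
    have := hper (n - 1) (by omega)
    simpa only [show n - 1 + q + 1 = n + q by omega, Nat.sub_add_cancel (by omega : 1 ≤ n)]
  exact eq_one_of_eventually_const hmul hval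
    (eventually_const_of_periodic hmul hval N.succ_pos hq hper') hp

end CompletelyMultiplicative

theorem stmt_17_general (f : ℕ → ℤ)
    (hmul : ∀ m n, 1 ≤ m → 1 ≤ n → f (m * n) = f m * f n)
    (hval : ∀ n, 1 ≤ n → f n = -1 ∨ f n = 1)
    (p : ℕ) (hp : p.Prime) (hfp : f p = -1) :
    Irrational (∑' n : ℕ, (f (n + 1) : ℝ) / 2 ^ (n + 1)) := by
  rintro ⟨r, hr⟩
  have hdigits : EventuallyPeriodic fun n => f (n + 1) :=
    SignedBinary.eventuallyPeriodic_of_tail_zero_eq_ratCast (a := fun n => f (n + 1))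
      (fun n => hval (n + 1) n.succ_pos) (by simpa [SignedBinary.tail] using hr.symm)
  have hfp_one := CompletelyMultiplicative.eq_one_of_eventuallyPeriodic hmul hval hdigits hp.one_le
  omega

theorem stmt_17 (f : ℕ → ℤ) (hf1 : f 1 = 1)
    (hmul : ∀ m n, 1 ≤ m → 1 ≤ n → f (m * n) = f m * f n)
    (hval : ∀ n, 1 ≤ n → f n = -1 ∨ f n = 1)
    (p : ℕ) (hp : p.Prime) (hfp : f p = -1) :
    Irrational (∑' n : ℕ, (f (n + 1) : ℝ) / 2 ^ (n + 1)) :=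
  stmt_17_general f hmul hval p hp hfp
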